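/- Let p be an odd prime, m, k positive integers with 1 ≤ v₂(m) < v₂(k), d = gcd(m,k), and π a primitive element of F_{p^m}. Then the number of triples (x,y,z) with x ∈ F_{p^m}* and y,z ∈ F_{p^m} satisfying (x^{p^k−1}y − y^{p^k})² = π(x^{p^k−1}z + π^{(p^k−1)/2} z^{p^k})² equals p^d(p^m − 1). -/

import Mathlib

/-!
Write `q = p^m`, `N = p^k` and `g = p^d - 1`. The generator `π` of `F_q^×` is not a square, so
`A^2 = π B^2` forces `A = B = 0`. Since `v₂(m) < v₂(k)`, the quotient `(q - 1) / g` is odd while `g`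
divides both `N - 1` and `(N - 1) / 2`; hence `B = 0` with `z ≠ 0` would exhibit `-1` as a `g`-th
power, whose `(q - 1) / g`-th power is both `1` and `-1`. So `z = 0`, and `A = 0` says that `y / x`
is fixed by `u ↦ u^N`. As `d = gcd(m, k)`, these are the fixed points of `u ↦ u^(p^d)`, namely `0`
and the `g`-th roots of unity, which gives `(q - 1) p^d` solutions.
-/

open Finset Function

namespace Nat

lemma padicValNat_gcd_of_lt {q m k : ℕ} [Fact q.Prime] (hm : m ≠ 0)
    (h : padicValNat q m < padicValNat q k) : padicValNat q (m.gcd k) = padicValNat q m := by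
  have hk : k ≠ 0 := by rintro rfl; simp at h
  rw [← factorization_def _ Fact.out, factorization_gcd hm hk, Finsupp.inf_apply,
    factorization_def _ Fact.out, factorization_def _ Fact.out]
  exact min_eq_left h.le

lemma odd_div_gcd_of_padicValNat_lt {m k : ℕ} (hm : m ≠ 0)
    (h : padicValNat 2 m < padicValNat 2 k) : Odd (m / m.gcd k) := by
  have hdm := gcd_dvd_left m k
  have hmd : m / m.gcd k ≠ 0 := (div_ne_zero_iff_of_dvd hdm).mpr ⟨hm, gcd_ne_zero_left hm⟩
  rw [odd_iff, ← two_dvd_ne_zero, dvd_iff_padicValNat_ne_zero hmd, padicValNat.div_of_dvd hdm,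
    padicValNat_gcd_of_lt hm h, Nat.sub_self, not_ne_iff]

lemma two_mul_gcd_dvd_of_padicValNat_lt {m k : ℕ} (hm : m ≠ 0)
    (h : padicValNat 2 m < padicValNat 2 k) : 2 * m.gcd k ∣ k := by
  have hdk := gcd_dvd_right m k
  have hk : k ≠ 0 := by rintro rfl; simp at h
  have hkd : k / m.gcd k ≠ 0 := (div_ne_zero_iff_of_dvd hdk).mpr ⟨hk, gcd_ne_zero_left hm⟩
  rw [mul_comm, ← dvd_div_iff_mul_dvd hdk, dvd_iff_padicValNat_ne_zero hkd,
    padicValNat.div_of_dvd hdk, padicValNat_gcd_of_lt hm h]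
  omega

lemma two_mul_pow_sub_one_dvd_pow_sub_one {a d k : ℕ} (ha : Odd a) (hdk : 2 * d ∣ k) :
    2 * (a ^ d - 1) ∣ a ^ k - 1 := by
  refine dvd_trans ?_ (pow_sub_one_dvd_pow_sub_one a hdk)
  have hsq : a ^ (2 * d) - 1 = (a ^ d - 1) * (a ^ d + 1) := by
    have h1 : 1 ≤ a ^ d := one_le_pow _ _ ha.pos
    have h2 : 1 ≤ a ^ (2 * d) := one_le_pow _ _ ha.pos
    zify [h1, h2]
    ring
  rw [hsq, mul_comm]
  exact mul_dvd_mul_left _ ha.pow.add_one.two_dvd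

lemma odd_pow_sub_one_div_pow_sub_one {a d m : ℕ} (ha : Odd a) (ha1 : 1 < a) (hdm : d ∣ m)
    (hodd : Odd (m / d)) : Odd ((a ^ m - 1) / (a ^ d - 1)) := by
  obtain ⟨n, rfl⟩ := hdm
  have hd : d ≠ 0 := by rintro rfl; simp at hodd
  rw [Nat.mul_div_cancel_left n (pos_of_ne_zero hd)] at hodd
  have h2 : 2 ≤ a ^ d := le_trans ha1 (le_self_pow hd a)
  rw [pow_mul, ← geomSum_eq h2, odd_sum_iff_odd_card_odd,
    filter_true_of_mem fun i _ => ha.pow.pow, card_range]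
  exact hodd

end Nat

section Monoid

variable {M : Type*} [Monoid M]

lemma isPeriodicPt_pow_iff {p n : ℕ} {u : M} :
    IsPeriodicPt (fun x : M => x ^ p) n u ↔ u ^ p ^ n = u := by
  rw [IsPeriodicPt, IsFixedPt, pow_iterate]

lemma pow_pow_eq_self_iff_gcd {p m k : ℕ} {u : M} (hu : u ^ p ^ m = u) :
    u ^ p ^ k = u ↔ u ^ p ^ m.gcd k = u := by
  simp only [← isPeriodicPt_pow_iff] at hu ⊢
  exact ⟨hu.gcd, fun h => h.trans_dvd (Nat.gcd_dvd_right m k)⟩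

end Monoid

lemma eq_zero_and_eq_zero_of_sq_eq_mul_sq {K : Type*} [Field K] {c a b : K} (hc : ¬IsSquare c)
    (h : a ^ 2 = c * b ^ 2) : a = 0 ∧ b = 0 := by
  by_cases hb : b = 0
  · subst hb
    simpa using h
  · refine absurd ⟨a / b, ?_⟩ hc
    rw [← sq, div_pow, h, mul_div_cancel_right₀ _ (pow_ne_zero 2 hb)]

lemma natCard_pow_succ_eq_self {K : Type*} [Field K] [Fintype K] {ζ : K} {n : ℕ} (hn : n ≠ 0)
    (hζ : IsPrimitiveRoot ζ n) : Nat.card {u : K // u ^ (n + 1) = u} = n + 1 := by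
  classical
  have hset : ({u | u ^ (n + 1) = u} : Finset K) =
      insert 0 (Polynomial.nthRootsFinset n (1 : K)) := by
    ext u
    simp [Polynomial.mem_nthRootsFinset (Nat.pos_of_ne_zero hn), pow_succ, mul_left_eq_self₀,
      or_comm]
  rw [Nat.card_eq_fintype_card, Fintype.card_subtype, hset,
    card_insert_of_notMem (by simp [Polynomial.mem_nthRootsFinset (Nat.pos_of_ne_zero hn), hn]),
    hζ.card_nthRootsFinset]

namespace FiniteField

variable {F : Type*} [Field F] [Fintype F]

lemma isPrimitiveRoot_of_forall_mem_zpowers {π : Fˣ} (hπ : ∀ x : Fˣ, x ∈ Subgroup.zpowers π) :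
    IsPrimitiveRoot (π : F) (Fintype.card F - 1) := by
  rw [← Nat.card_eq_fintype_card, ← Nat.card_units, ← orderOf_eq_card_of_forall_mem_zpowers hπ,
    ← orderOf_units]
  exact IsPrimitiveRoot.orderOf _

lemma not_isSquare_of_forall_mem_zpowers (hF : ringChar F ≠ 2) {π : Fˣ}
    (hπ : ∀ x : Fˣ, x ∈ Subgroup.zpowers π) : ¬IsSquare (π : F) := by
  rw [isSquare_iff hF π.ne_zero]
  intro h
  have hdvd : Fintype.card F - 1 ∣ Fintype.card F / 2 :=
    (isPrimitiveRoot_of_forall_mem_zpowers hπ).dvd_of_pow_eq_one _ h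
  have hodd := odd_card_of_char_ne_two hF
  have h1 := Fintype.one_lt_card (α := F)
  have := Nat.le_of_dvd (by omega) hdvd
  omega

lemma pow_ne_neg_one_of_odd_div (hF : ringChar F ≠ 2) {g : ℕ} (hg : g ∣ Fintype.card F - 1)
    (hodd : Odd ((Fintype.card F - 1) / g)) (a : F) : a ^ g ≠ -1 := by
  intro h
  have ha : a ≠ 0 := by
    rintro rfl
    have hg0 : g ≠ 0 := by rintro rfl; simp at hodd
    simp [zero_pow hg0] at h
  apply Ring.neg_one_ne_one_of_char_ne_two hF
  rw [← hodd.neg_one_pow, ← h, ← pow_mul, Nat.mul_div_cancel' hg, pow_card_sub_one_eq_one a ha]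

lemma eq_zero_of_pow_sub_one_mul_add_pow_mul_pow_eq_zero (hF : ringChar F ≠ 2) {g : ℕ}
    (hg : g ∣ Fintype.card F - 1) (hodd : Odd ((Fintype.card F - 1) / g)) {N e : ℕ} (hN : N ≠ 0)
    (hgN : g ∣ N - 1) (hge : g ∣ e) {c x z : F} (hc : c ≠ 0)
    (h : x ^ (N - 1) * z + c ^ e * z ^ N = 0) : z = 0 := by
  by_contra hz
  obtain ⟨a, ha⟩ := hgN
  obtain ⟨b, hb⟩ := hge
  have hsum : x ^ (N - 1) + c ^ e * z ^ (N - 1) = 0 := by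
    have : (x ^ (N - 1) + c ^ e * z ^ (N - 1)) * z = 0 := by
      rw [← h, add_mul, mul_assoc, pow_sub_one_mul hN]
    exact (mul_eq_zero.mp this).resolve_right hz
  have hw : c ^ b * z ^ a ≠ 0 := mul_ne_zero (pow_ne_zero _ hc) (pow_ne_zero _ hz)
  apply pow_ne_neg_one_of_odd_div hF hg hodd (x ^ a / (c ^ b * z ^ a))
  rw [div_pow, div_eq_iff (pow_ne_zero _ hw), mul_pow, ← pow_mul', ← pow_mul', ← pow_mul', ← ha,
    ← hb]
  linear_combination hsum

lemma sq_sub_eq_mul_sq_iff (hF : ringChar F ≠ 2) {c : F} (hc : ¬IsSquare c) {g : ℕ}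
    (hg : g ∣ Fintype.card F - 1) (hodd : Odd ((Fintype.card F - 1) / g)) {N e : ℕ} (hN : N ≠ 0)
    (hgN : g ∣ N - 1) (hge : g ∣ e) {x y z : F} :
    (x ^ (N - 1) * y - y ^ N) ^ 2 = c * (x ^ (N - 1) * z + c ^ e * z ^ N) ^ 2 ↔
      y ^ N = x ^ (N - 1) * y ∧ z = 0 := by
  constructor
  · intro h
    obtain ⟨hA, hB⟩ := eq_zero_and_eq_zero_of_sq_eq_mul_sq hc h
    have hc0 : c ≠ 0 := by
      rintro rfl
      exact hc IsSquare.zero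
    exact ⟨(sub_eq_zero.mp hA).symm,
      eq_zero_of_pow_sub_one_mul_add_pow_mul_pow_eq_zero hF hg hodd hN hgN hge hc0 hB⟩
  · rintro ⟨hy, rfl⟩
    simp [hy, zero_pow hN]

end FiniteField

def unitsProdPowEqSelfEquiv (F : Type*) [Field F] {N : ℕ} (hN : N ≠ 0) :
    {t : F × F × F // t.1 ≠ 0 ∧ t.2.1 ^ N = t.1 ^ (N - 1) * t.2.1 ∧ t.2.2 = 0} ≃
      Fˣ × {u : F // u ^ N = u} where
  toFun t := (Units.mk0 t.1.1 t.2.1, ⟨t.1.2.1 / t.1.1, by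
    rw [div_pow, t.2.2.1, ← pow_sub_one_mul hN t.1.1, mul_div_mul_left _ _ (pow_ne_zero _ t.2.1)]⟩)
  invFun w := ⟨(w.1, w.2 * w.1, 0), w.1.ne_zero, by
    rw [mul_pow, w.2.2, ← pow_sub_one_mul hN (w.1 : F)]; ring, rfl⟩
  left_inv := by
    rintro ⟨⟨x, y, z⟩, hx, hy, hz⟩
    obtain rfl : z = 0 := hz
    simp [div_mul_cancel₀ _ hx]
  right_inv := by
    rintro ⟨x, u, hu⟩
    ext <;> simp

theorem stmt_10_general (p m k : ℕ) (hp : p.Prime) (hpo : Odd p) (hm : 0 < m)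
    (hv2 : padicValNat 2 m < padicValNat 2 k)
    (F : Type*) [Field F] [Fintype F] (hF : Fintype.card F = p ^ m)
    (π : Fˣ) (hπ : ∀ x : Fˣ, x ∈ Subgroup.zpowers π) :
    Nat.card {t : F × F × F // t.1 ≠ 0 ∧
        (t.1 ^ (p ^ k - 1) * t.2.1 - t.2.1 ^ (p ^ k)) ^ 2 =
          (π : F) * (t.1 ^ (p ^ k - 1) * t.2.2
            + (π : F) ^ ((p ^ k - 1) / 2) * t.2.2 ^ (p ^ k)) ^ 2} =
      p ^ Nat.gcd m k * (p ^ m - 1) := by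
  have : Fact p.Prime := ⟨hp⟩
  have : CharP F p := charP_of_card_eq_prime_pow hF
  have hF2 : ringChar F ≠ 2 := by
    rw [ringChar.eq F p]
    rintro rfl
    exact absurd hpo (by decide)
  set d := m.gcd k
  have hN : p ^ k ≠ 0 := pow_ne_zero k hp.ne_zero
  have hd : p ^ d - 1 ≠ 0 :=
    Nat.sub_ne_zero_of_lt (Nat.one_lt_pow (Nat.gcd_pos_of_pos_left k hm).ne' hp.one_lt)
  have hdk : 2 * d ∣ k := Nat.two_mul_gcd_dvd_of_padicValNat_lt hm.ne' hv2
  have hg : p ^ d - 1 ∣ Fintype.card F - 1 :=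
    hF ▸ Nat.pow_sub_one_dvd_pow_sub_one p (Nat.gcd_dvd_left m k)
  have hodd : Odd ((Fintype.card F - 1) / (p ^ d - 1)) :=
    hF ▸ Nat.odd_pow_sub_one_div_pow_sub_one hpo hp.one_lt (Nat.gcd_dvd_left m k)
      (Nat.odd_div_gcd_of_padicValNat_lt hm.ne' hv2)
  have hgN : p ^ d - 1 ∣ p ^ k - 1 := Nat.pow_sub_one_dvd_pow_sub_one p (dvd_of_mul_left_dvd hdk)
  have hge : p ^ d - 1 ∣ (p ^ k - 1) / 2 :=
    Nat.dvd_div_of_mul_dvd (Nat.two_mul_pow_sub_one_dvd_pow_sub_one hpo hdk)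
  have hfix (u : F) : u ^ p ^ k = u ↔ u ^ (p ^ d - 1 + 1) = u := by
    rw [Nat.sub_add_cancel (Nat.one_le_pow _ _ hp.pos)]
    exact pow_pow_eq_self_iff_gcd (hF ▸ FiniteField.pow_card u)
  have hζ : IsPrimitiveRoot ((π : F) ^ ((Fintype.card F - 1) / (p ^ d - 1))) (p ^ d - 1) := by
    have hq := Nat.div_div_self hg (Nat.sub_ne_zero_of_lt (hF ▸ Nat.one_lt_pow hm.ne' hp.one_lt))
    simpa [hq] using (FiniteField.isPrimitiveRoot_of_forall_mem_zpowers hπ).pow_of_dvd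
      hodd.pos.ne' (Nat.div_dvd_of_dvd hg)
  rw [Nat.card_congr ((Equiv.subtypeEquivRight fun t => and_congr_right fun _ =>
      FiniteField.sq_sub_eq_mul_sq_iff hF2 (FiniteField.not_isSquare_of_forall_mem_zpowers hF2 hπ)
        hg hodd hN hgN hge).trans (unitsProdPowEqSelfEquiv F hN)),
    Nat.card_prod, Nat.card_units, Nat.card_congr (Equiv.subtypeEquivRight hfix),
    natCard_pow_succ_eq_self hd hζ, Nat.card_eq_fintype_card, hF,
    Nat.sub_add_cancel (Nat.one_le_pow _ _ hp.pos), mul_comm]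

theorem stmt_10 (p m k : ℕ) (hp : p.Prime) (hpo : Odd p) (hm : 0 < m) (hk : 0 < k)
    (hv1 : 1 ≤ padicValNat 2 m) (hv2 : padicValNat 2 m < padicValNat 2 k)
    (F : Type*) [Field F] [Fintype F] (hF : Fintype.card F = p ^ m)
    (π : Fˣ) (hπ : ∀ x : Fˣ, x ∈ Subgroup.zpowers π) :
    Nat.card {t : F × F × F // t.1 ≠ 0 ∧
        (t.1 ^ (p ^ k - 1) * t.2.1 - t.2.1 ^ (p ^ k)) ^ 2 =
          (π : F) * (t.1 ^ (p ^ k - 1) * t.2.2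
            + (π : F) ^ ((p ^ k - 1) / 2) * t.2.2 ^ (p ^ k)) ^ 2} =
      p ^ Nat.gcd m k * (p ^ m - 1) :=
  stmt_10_general p m k hp hpo hm hv2 F hF π hπ
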